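/- There exists a constant c > 0 such that for all real numbers a, b with 0 ≤ a ≤ b, one has Λ(a) + Λ(b) − Λ(a+b) ≥ c · a^{1/2} · (min(a,1))^{1/2} · (min(b,1))², where Λ(ξ) = ξ·√(tanh ξ / ξ) (with Λ(0)=0). -/

import Mathlib

/-!
For `ξ ≥ 0`, `Λ ξ = √(ξ tanh ξ)` is the geometric mean of the concave functions `ξ` and `tanh ξ`,
hence concave on `[0, ∞)`. For such a function the defect `Λ a + Λ b - Λ (a + b)` is monotone in
each argument, so it suffices to bound it in two regimes. For `a ≤ b ≤ 1/8`, the Taylor bounds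
`ξ - ξ³/3 ≤ tanh ξ ≤ ξ - ξ³/3 + 2ξ⁵/15` give `(Λ a + Λ b)² - Λ (a + b)² ≥ a b³ / 4`, and dividing by
`Λ a + Λ b + Λ (a + b) ≤ 4 b` bounds the defect below by `a b² / 16`. For `a ≥ 1`, `tanh a ≥ 3/4`
gives `2 Λ a - Λ (2 a) ≥ √a / 4`.
-/

/-- The Whitham dispersion relation, `Λ ξ = ξ * √(tanh ξ / ξ)` (with `Λ 0 = 0`). -/
noncomputable def Lam (ξ : ℝ) : ℝ := ξ * Real.sqrt (Real.tanh ξ / ξ)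

open Real Set

theorem sub_le_sub_of_hasDerivAt_le {f g f' g' : ℝ → ℝ} {x y : ℝ} (hxy : x ≤ y)
    (hf : ∀ t ∈ Icc x y, HasDerivAt f (f' t) t) (hg : ∀ t ∈ Icc x y, HasDerivAt g (g' t) t)
    (hle : ∀ t ∈ Icc x y, f' t ≤ g' t) : f y - f x ≤ g y - g x := by
  have hmono : MonotoneOn (fun t => g t - f t) (Icc x y) :=
    monotoneOn_of_hasDerivWithinAt_nonneg (convex_Icc x y)
      (fun t ht => ((hg t ht).sub (hf t ht)).continuousAt.continuousWithinAt)
      (fun t ht => ((hg t (interior_subset ht)).sub (hf t (interior_subset ht))).hasDerivWithinAt)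
      (fun t ht => sub_nonneg.2 (hle t (interior_subset ht)))
  linarith [hmono (left_mem_Icc.2 hxy) (right_mem_Icc.2 hxy) hxy]

namespace Real

theorem hasDerivAt_tanh (x : ℝ) : HasDerivAt tanh (1 - tanh x ^ 2) x := by
  have h := (hasDerivAt_sinh x).div (hasDerivAt_cosh x) (cosh_pos x).ne'
  rw [show tanh = fun y => sinh y / cosh y from funext tanh_eq_sinh_div_cosh]
  refine h.congr_deriv ?_
  field_simp

theorem monotone_tanh : Monotone tanh :=
  monotone_of_hasDerivAt_nonneg hasDerivAt_tanh fun x => sub_nonneg.2 (tanh_sq_lt_one x).le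

theorem tanh_nonneg {x : ℝ} (hx : 0 ≤ x) : 0 ≤ tanh x := by
  simpa using monotone_tanh hx

theorem tanh_le_self {x : ℝ} (hx : 0 ≤ x) : tanh x ≤ x := by
  have := sub_le_sub_of_hasDerivAt_le hx (fun t _ => hasDerivAt_tanh t)
    (fun t _ => hasDerivAt_id' t) (fun t _ => by nlinarith [sq_nonneg (tanh t)])
  simpa using this

theorem sub_pow_three_div_three_le_tanh {x : ℝ} (hx : 0 ≤ x) : x - x ^ 3 / 3 ≤ tanh x := by
  have := sub_le_sub_of_hasDerivAt_le hx (f := fun t => t - t ^ 3 / 3) (f' := fun t => 1 - t ^ 2)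
    (fun t _ => ((hasDerivAt_id' t).sub ((hasDerivAt_pow 3 t).div_const 3)).congr_deriv (by ring))
    (fun t _ => hasDerivAt_tanh t)
    (fun t ht => by nlinarith [tanh_le_self ht.1, tanh_nonneg ht.1])
  simpa using this

theorem tanh_le_taylor_five {x : ℝ} (hx : 0 ≤ x) :
    tanh x ≤ x - x ^ 3 / 3 + 2 / 15 * x ^ 5 := by
  have := sub_le_sub_of_hasDerivAt_le hx (g := fun t => t - t ^ 3 / 3 + 2 / 15 * t ^ 5)
    (g' := fun t => 1 - t ^ 2 + 2 / 3 * t ^ 4) (fun t _ => hasDerivAt_tanh t)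
    (fun t _ => by
      refine (((hasDerivAt_id' t).sub ((hasDerivAt_pow 3 t).div_const 3)).add
        ((hasDerivAt_pow 5 t).const_mul (2 / 15))).congr_deriv ?_
      push_cast; ring)
    (fun t ht => by
      rcases le_or_gt (t ^ 2) 3 with ht3 | ht3
      · have hcubic := sub_pow_three_div_three_le_tanh ht.1
        have : 0 ≤ t - t ^ 3 / 3 := by nlinarith [ht.1]
        nlinarith [mul_le_mul hcubic hcubic this (tanh_nonneg ht.1), pow_nonneg ht.1 6]
      · nlinarith [sq_nonneg (tanh t)])
  simpa using this

theorem three_quarters_le_tanh {x : ℝ} (hx : 1 ≤ x) : 3 / 4 ≤ tanh x := by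
  refine le_trans ?_ (monotone_tanh hx)
  rw [tanh_eq, exp_neg, le_div_iff₀ (by positivity)]
  nlinarith [exp_one_gt_d9, mul_inv_cancel₀ (exp_pos 1).ne', inv_pos.2 (exp_pos 1)]

theorem concaveOn_tanh : ConcaveOn ℝ (Ici 0) tanh := by
  have hderiv : deriv tanh = fun x => 1 - tanh x ^ 2 := funext fun x => (hasDerivAt_tanh x).deriv
  refine AntitoneOn.concaveOn_of_deriv (convex_Ici 0)
    (fun x _ => (hasDerivAt_tanh x).continuousAt.continuousWithinAt)
    (fun x _ => (hasDerivAt_tanh x).differentiableAt.differentiableWithinAt) ?_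
  rw [hderiv, interior_Ici]
  intro x hx y _ hxy
  nlinarith [monotone_tanh hxy, tanh_nonneg hx.le]

end Real

theorem ConcaveOn.sqrt_mul {s : Set ℝ} {f g : ℝ → ℝ} (hf : ConcaveOn ℝ s f) (hg : ConcaveOn ℝ s g)
    (hf₀ : ∀ x ∈ s, 0 ≤ f x) (hg₀ : ∀ x ∈ s, 0 ≤ g x) :
    ConcaveOn ℝ s fun x => √(f x * g x) := by
  refine ⟨hf.1, fun x hx y hy a b ha hb hab => ?_⟩
  have hfxy := hf.2 hx hy ha hb hab
  have hgxy := hg.2 hx hy ha hb hab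
  simp only [smul_eq_mul] at hfxy hgxy ⊢
  apply le_sqrt_of_sq_le
  calc (a * √(f x * g x) + b * √(f y * g y)) ^ 2
      ≤ (a * f x + b * f y) * (a * g x + b * g y) := by
        -- Cauchy–Schwarz for the vectors `(√(a f x), √(b f y))` and `(√(a g x), √(b g y))`
        have key (p q r t : ℝ) : (a * (p * q) + b * (r * t)) ^ 2 ≤
            (a * p ^ 2 + b * r ^ 2) * (a * q ^ 2 + b * t ^ 2) := by
          nlinarith [mul_nonneg (mul_nonneg ha hb) (sq_nonneg (p * t - r * q))]
        simpa only [Real.sqrt_mul (hf₀ x hx), Real.sqrt_mul (hf₀ y hy), sq_sqrt (hf₀ x hx),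
          sq_sqrt (hf₀ y hy), sq_sqrt (hg₀ x hx), sq_sqrt (hg₀ y hy)] using
          key (√(f x)) (√(g x)) (√(f y)) (√(g y))
    _ ≤ f (a * x + b * y) * g (a * x + b * y) :=
        mul_le_mul hfxy hgxy
          (add_nonneg (mul_nonneg ha (hg₀ x hx)) (mul_nonneg hb (hg₀ y hy)))
          ((add_nonneg (mul_nonneg ha (hf₀ x hx)) (mul_nonneg hb (hf₀ y hy))).trans hfxy)

theorem ConcaveOn.add_le_add_of_mem_Icc {s : Set ℝ} {f : ℝ → ℝ} (hf : ConcaveOn ℝ s f)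
    {x y z : ℝ} (hx : x ∈ s) (hy : y ∈ s) (hz : z ∈ Icc x y) :
    f x + f y ≤ f z + f (x + y - z) := by
  rcases hz.1.eq_or_lt with rfl | hxz
  · simp
  have hxy : 0 < y - x := by linarith [hz.2]
  set t := (y - z) / (y - x)
  have ht₀ : 0 ≤ t := div_nonneg (by linarith [hz.2]) hxy.le
  have ht₁ : 0 ≤ 1 - t := by
    rw [sub_nonneg, div_le_one hxy]; linarith
  have hz' := hf.2 hx hy ht₀ ht₁ (by ring)
  have hw' := hf.2 hx hy ht₁ ht₀ (by ring)
  have ez : t • x + (1 - t) • y = z := by simp only [t, smul_eq_mul]; field_simp; ring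
  have ew : (1 - t) • x + t • y = x + y - z := by simp only [t, smul_eq_mul]; field_simp; ring
  rw [ez] at hz'
  rw [ew] at hw'
  simp only [smul_eq_mul] at hz' hw'
  linarith

def defect (f : ℝ → ℝ) (a b : ℝ) : ℝ := f a + f b - f (a + b)

theorem defect_comm (f : ℝ → ℝ) (a b : ℝ) : defect f a b = defect f b a := by
  simp only [defect, add_comm]

theorem ConcaveOn.defect_le_defect_right {f : ℝ → ℝ} (hf : ConcaveOn ℝ (Ici 0) f) {a b b' : ℝ}
    (ha : 0 ≤ a) (hb : 0 ≤ b) (hbb' : b ≤ b') : defect f a b ≤ defect f a b' := by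
  have := hf.add_le_add_of_mem_Icc (x := b) (y := a + b') (z := b') hb
    (mem_Ici.2 (by linarith)) ⟨hbb', by linarith⟩
  rw [show b + (a + b') - b' = a + b by ring] at this
  unfold defect
  linarith

theorem ConcaveOn.defect_le_defect {f : ℝ → ℝ} (hf : ConcaveOn ℝ (Ici 0) f) {a a' b b' : ℝ}
    (ha : 0 ≤ a) (haa' : a ≤ a') (hb : 0 ≤ b) (hbb' : b ≤ b') : defect f a b ≤ defect f a' b' :=
  calc defect f a b ≤ defect f a b' := hf.defect_le_defect_right ha hb hbb'
    _ = defect f b' a := defect_comm f a b'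
    _ ≤ defect f b' a' := hf.defect_le_defect_right (hb.trans hbb') ha haa'
    _ = defect f a' b' := defect_comm f b' a'

theorem ConcaveOn.defect_nonneg {f : ℝ → ℝ} (hf : ConcaveOn ℝ (Ici 0) f) (hf₀ : 0 ≤ f 0) {a b : ℝ}
    (ha : 0 ≤ a) (hb : 0 ≤ b) : 0 ≤ defect f a b := by
  calc 0 ≤ f 0 := hf₀
    _ = defect f 0 0 := by simp [defect]
    _ ≤ defect f a b := hf.defect_le_defect le_rfl ha le_rfl hb

theorem Lam_eq_sqrt {x : ℝ} (hx : 0 ≤ x) : Lam x = √(x * tanh x) := by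
  rcases hx.eq_or_lt with rfl | hx
  · simp [Lam]
  rw [Lam, show x * tanh x = x ^ 2 * (tanh x / x) by field_simp, Real.sqrt_mul (sq_nonneg x),
    sqrt_sq hx.le]

theorem concaveOn_Lam : ConcaveOn ℝ (Ici 0) Lam :=
  ((concaveOn_id (convex_Ici 0)).sqrt_mul concaveOn_tanh (fun _ hx => hx)
    (fun _ hx => tanh_nonneg hx)).congr fun _ hx => (Lam_eq_sqrt hx).symm

theorem sq_Lam {x : ℝ} (hx : 0 ≤ x) : Lam x ^ 2 = x * tanh x := by
  rw [Lam_eq_sqrt hx, sq_sqrt (mul_nonneg hx (tanh_nonneg hx))]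

theorem Lam_nonneg {x : ℝ} (hx : 0 ≤ x) : 0 ≤ Lam x :=
  (Lam_eq_sqrt hx).symm ▸ sqrt_nonneg _

theorem Lam_le_self {x : ℝ} (hx : 0 ≤ x) : Lam x ≤ x := by
  rw [Lam_eq_sqrt hx, sqrt_le_left hx, sq]
  exact mul_le_mul_of_nonneg_left (tanh_le_self hx) hx

theorem mul_one_sub_sq_div_three_le_Lam {x : ℝ} (hx : 0 ≤ x) (hx3 : x ^ 2 ≤ 3) :
    x * (1 - x ^ 2 / 3) ≤ Lam x := by
  rw [Lam_eq_sqrt hx]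
  apply le_sqrt_of_sq_le
  have := sub_pow_three_div_three_le_tanh hx
  have : 0 ≤ x ^ 2 * (1 - x ^ 2 / 3) := mul_nonneg (sq_nonneg x) (by linarith)
  nlinarith [mul_le_mul_of_nonneg_left this (sq_nonneg x)]

theorem deriv_mul_tanh_remainder_le {t : ℝ} (ht : 0 ≤ t) :
    tanh t + t * (1 - tanh t ^ 2) - 2 * t + 4 / 3 * t ^ 3 ≤ 4 / 5 * t ^ 5 := by
  have h1 := tanh_le_self ht
  have h0 := tanh_nonneg ht
  rcases le_or_gt (t ^ 2) 3 with h3 | h3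
  · have h2 := sub_pow_three_div_three_le_tanh ht
    have h5 := tanh_le_taylor_five ht
    have hpos : 0 ≤ t - t ^ 3 / 3 := by nlinarith
    have hsq := mul_le_mul h2 h2 hpos h0
    nlinarith [mul_le_mul_of_nonneg_left hsq ht, pow_nonneg ht 7]
  · nlinarith [mul_nonneg ht (mul_nonneg h0 h0), pow_nonneg ht 3, pow_nonneg ht 5]

theorem mul_tanh_remainder_sub_le {x y : ℝ} (hx : 0 ≤ x) (hxy : x ≤ y) :
    (y * tanh y - y ^ 2 + y ^ 4 / 3) - (x * tanh x - x ^ 2 + x ^ 4 / 3) ≤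
      4 / 5 * y ^ 5 * (y - x) := by
  have := sub_le_sub_of_hasDerivAt_le hxy (f := fun t => t * tanh t - t ^ 2 + t ^ 4 / 3)
    (g := fun t => 4 / 5 * y ^ 5 * t)
    (f' := fun t => tanh t + t * (1 - tanh t ^ 2) - 2 * t + 4 / 3 * t ^ 3)
    (fun t _ => by
      refine ((((hasDerivAt_id' t).mul (hasDerivAt_tanh t)).sub (hasDerivAt_pow 2 t)).add
        ((hasDerivAt_pow 4 t).div_const 3)).congr_deriv ?_
      push_cast; ring)
    (fun t _ => (hasDerivAt_id' t).const_mul _ |>.congr_deriv (mul_one _))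
    (fun t ht => (deriv_mul_tanh_remainder_le (hx.trans ht.1)).trans <| by
      have := pow_le_pow_left₀ (hx.trans ht.1) ht.2 5
      linarith)
  linarith [this]

theorem sq_add_sub_sq_Lam_ge {a b : ℝ} (ha : 0 ≤ a) (hab : a ≤ b) (hb : b ≤ 1 / 8) :
    a * b ^ 3 / 4 ≤ (Lam a + Lam b) ^ 2 - Lam (a + b) ^ 2 := by
  have hb₀ := ha.trans hab
  have hA : a ^ 2 - a ^ 4 / 3 ≤ Lam a ^ 2 := by
    rw [sq_Lam ha]; nlinarith [sub_pow_three_div_three_le_tanh ha]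
  have hAB : a * (1 - a ^ 2 / 3) * (b * (1 - b ^ 2 / 3)) ≤ Lam a * Lam b :=
    mul_le_mul (mul_one_sub_sq_div_three_le_Lam ha (by nlinarith))
      (mul_one_sub_sq_div_three_le_Lam hb₀ (by nlinarith)) (by nlinarith) (Lam_nonneg ha)
  -- comparing the Taylor remainders of `t tanh t` at `b` and `a + b` keeps the error `O(a b⁵)`
  have hBC := mul_tanh_remainder_sub_le hb₀ (le_add_of_nonneg_left ha : b ≤ a + b)
  have h5 : a * (a + b) ^ 5 ≤ a * (32 * b ^ 5) := by
    have := pow_le_pow_left₀ (add_nonneg ha hb₀) (by linarith : a + b ≤ 2 * b) 5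
    exact mul_le_mul_of_nonneg_left (by linarith) ha
  have hpoly : a * b ^ 3 / 4 + 128 / 5 * a * b ^ 5 ≤ a ^ 2 - a ^ 4 / 3
      + 2 * (a * (1 - a ^ 2 / 3) * (b * (1 - b ^ 2 / 3))) + b ^ 2 - b ^ 4 / 3
      - (a + b) ^ 2 + (a + b) ^ 4 / 3 := by
    -- the right side equals `(2 a³ b + 6 a² b² + 2 a b³) / 3 + 2 a³ b³ / 9`
    have hb2 : b ^ 2 ≤ 1 / 64 := by nlinarith
    nlinarith [mul_nonneg (mul_nonneg ha (pow_nonneg hb₀ 3))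
        (by linarith : 0 ≤ 5 / 12 - 128 / 5 * b ^ 2),
      mul_nonneg (pow_nonneg ha 3) hb₀, mul_nonneg (sq_nonneg a) (sq_nonneg b),
      mul_nonneg (pow_nonneg ha 3) (pow_nonneg hb₀ 3)]
  rw [add_sub_cancel_right] at hBC
  have hexpand : (Lam a + Lam b) ^ 2 - Lam (a + b) ^ 2 =
      Lam a ^ 2 + 2 * (Lam a * Lam b) + b * tanh b - (a + b) * tanh (a + b) := by
    rw [← sq_Lam hb₀, ← sq_Lam (add_nonneg ha hb₀)]; ring
  linarith

theorem mul_sq_div_sixteen_le_defect_Lam {a b : ℝ} (ha : 0 ≤ a) (hab : a ≤ b) (hb : b ≤ 1 / 8) :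
    a * b ^ 2 / 16 ≤ defect Lam a b := by
  have hb₀ := ha.trans hab
  have hD : 0 ≤ defect Lam a b := concaveOn_Lam.defect_nonneg (by simp [Lam]) ha hb₀
  rcases hb₀.eq_or_lt with rfl | hb₀
  · simpa using hD
  have hsum : Lam a + Lam b + Lam (a + b) ≤ 4 * b := by
    linarith [Lam_le_self ha, Lam_le_self hb₀.le, Lam_le_self (add_nonneg ha hb₀.le)]
  have : a * b ^ 3 / 4 ≤ defect Lam a b * (4 * b) := calc
    a * b ^ 3 / 4 ≤ (Lam a + Lam b) ^ 2 - Lam (a + b) ^ 2 := sq_add_sub_sq_Lam_ge ha hab hb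
    _ = defect Lam a b * (Lam a + Lam b + Lam (a + b)) := by rw [defect]; ring
    _ ≤ defect Lam a b * (4 * b) := mul_le_mul_of_nonneg_left hsum hD
  exact le_of_mul_le_mul_right (by linarith) (by positivity : 0 < 4 * b)

theorem sqrt_div_four_le_defect_Lam_self {a : ℝ} (ha : 1 ≤ a) : √a / 4 ≤ defect Lam a a := by
  have ha₀ : 0 ≤ a := by linarith
  have hlow : 0.85 * √a ≤ Lam a := by
    rw [Lam_eq_sqrt ha₀]
    apply le_sqrt_of_sq_le
    nlinarith [sq_sqrt ha₀, three_quarters_le_tanh ha]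
  have hup : Lam (a + a) ≤ 1.42 * √a := by
    rw [Lam_eq_sqrt (by linarith), sqrt_le_left (by positivity)]
    nlinarith [sq_sqrt ha₀, (tanh_lt_one (a + a)).le]
  rw [defect]
  linarith [sqrt_nonneg a]

theorem min_one_le_eight_mul_min_eighth {x : ℝ} (hx : 0 ≤ x) : min x 1 ≤ 8 * min x (1 / 8) := by
  rcases le_total x (1 / 8) with h | h
  · rw [min_eq_left h, min_eq_left (by linarith)]; linarith
  · rw [min_eq_right h]; simp

/-- Lower bound of the subadditivity defect (resonance function lower bound):
for `0 ≤ a ≤ b`, `Λ a + Λ b - Λ (a+b) ≳ a^{1/2} (a ∧ 1)^{1/2} (b ∧ 1)²`. -/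
theorem resonance_lower_bound :
    ∃ c > (0 : ℝ), ∀ a b : ℝ, 0 ≤ a → a ≤ b →
      c * Real.sqrt a * Real.sqrt (min a 1) * (min b 1) ^ 2 ≤
        Lam a + Lam b - Lam (a + b) := by
  refine ⟨1 / 8192, by norm_num, fun a b ha hab => ?_⟩
  change _ ≤ defect Lam a b
  have hb := ha.trans hab
  have hmb : 0 ≤ min b 1 := le_min hb zero_le_one
  rcases le_or_gt a 1 with ha₁ | ha₁
  · have ha' := min_one_le_eight_mul_min_eighth ha
    have hb' := pow_le_pow_left₀ hmb (min_one_le_eight_mul_min_eighth hb) 2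
    rw [min_eq_left ha₁] at ha' ⊢
    calc 1 / 8192 * √a * √a * min b 1 ^ 2 = a * min b 1 ^ 2 / 8192 := by
          rw [mul_assoc (1 / 8192 : ℝ), mul_self_sqrt ha]; ring
      _ ≤ min a (1 / 8) * min b (1 / 8) ^ 2 / 16 := by
          nlinarith [mul_le_mul ha' hb' (sq_nonneg _) (by positivity)]
      _ ≤ defect Lam (min a (1 / 8)) (min b (1 / 8)) :=
          mul_sq_div_sixteen_le_defect_Lam (by positivity) (min_le_min_right _ hab)
            (min_le_right _ _)
      _ ≤ defect Lam a b :=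
          concaveOn_Lam.defect_le_defect (by positivity) (min_le_left _ _) (by positivity)
            (min_le_left _ _)
  · have hsq : min b 1 ^ 2 ≤ 1 := pow_le_one₀ hmb (min_le_right b 1)
    rw [min_eq_right ha₁.le, sqrt_one]
    calc 1 / 8192 * √a * 1 * min b 1 ^ 2 ≤ √a / 4 := by nlinarith [sqrt_nonneg a]
      _ ≤ defect Lam a a := sqrt_div_four_le_defect_Lam_self ha₁.le
      _ ≤ defect Lam a b := concaveOn_Lam.defect_le_defect ha le_rfl ha hab
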